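/- arXiv:1312.1045 — 3 statements merged into one kernel-verified Lean document; each statement's English description precedes it below -/
import Mathlib

section
/- Let H, G : ℝⁿ×ℝⁿ → ℝ be C¹ Hamiltonians. If u : ℝ² × ℝⁿ → ℝ, u = u(t,s,x), is C² and satisfies ∂_t u + H(x, D_x u) = 0 and ∂_s u + G(x, D_x u) = 0 on an open set, then at every point of that set the Poisson bracket {H,G}(x, D_x u) := ∂_p H · ∂_x G − ∂_p G · ∂_x H evaluated at (x, D_x u(t,s,x)) equals 0. -/
/-! Differentiate the `H`-equation in `s` and in the direction `(0, 0, ∂ₚG)`, and the `G`-equation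
in `t` and in the direction `(0, 0, ∂ₚH)`, where `∂ᵥ(Dₓu) · ξ = D²u(v, (0, 0, ξ))` handles the
momentum terms. Every second derivative of `u` occurs twice in a signed sum of these four
identities, and cancels by symmetry of `D²u`; what is left is `{H,G}(x, Dₓu) = 0`. -/

open Real RealInnerProductSpace

variable {n : ℕ}

noncomputable def gradX (H : EuclideanSpace ℝ (Fin n) → EuclideanSpace ℝ (Fin n) → ℝ)
    (x p : EuclideanSpace ℝ (Fin n)) : EuclideanSpace ℝ (Fin n) :=
  gradient (fun y => H y p) x

noncomputable def gradP (H : EuclideanSpace ℝ (Fin n) → EuclideanSpace ℝ (Fin n) → ℝ)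
    (x p : EuclideanSpace ℝ (Fin n)) : EuclideanSpace ℝ (Fin n) :=
  gradient (fun q => H x q) p

noncomputable def poissonBracket (H G : EuclideanSpace ℝ (Fin n) → EuclideanSpace ℝ (Fin n) → ℝ)
    (x p : EuclideanSpace ℝ (Fin n)) : ℝ :=
  ⟪gradP H x p, gradX G x p⟫ - ⟪gradP G x p, gradX H x p⟫

open InnerProductSpace ContinuousLinearMap Filter Topology

section

variable {E : Type*} [NormedAddCommGroup E] [NormedSpace ℝ E] {u : ℝ × ℝ × E → ℝ} {q : ℝ × ℝ × E}

theorem deriv_slice_fst (hu : DifferentiableAt ℝ u q) :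
    deriv (fun τ => u (τ, q.2.1, q.2.2)) q.1 = fderiv ℝ u q (1, 0, 0) := by
  have h : HasFDerivAt (fun τ => u (τ, q.2.1, q.2.2)) ((fderiv ℝ u q).comp (inl ℝ ℝ (ℝ × E))) q.1 :=
    hu.hasFDerivAt.comp q.1 (hasFDerivAt_prodMk_left q.1 q.2)
  exact h.hasDerivAt.deriv

theorem deriv_slice_snd (hu : DifferentiableAt ℝ u q) :
    deriv (fun σ => u (q.1, σ, q.2.2)) q.2.1 = fderiv ℝ u q (0, 1, 0) := by
  have h : HasFDerivAt (fun σ => u (q.1, σ, q.2.2))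
      ((fderiv ℝ u q).comp ((inr ℝ ℝ (ℝ × E)).comp (inl ℝ ℝ E))) q.2.1 :=
    hu.hasFDerivAt.comp q.2.1
      ((hasFDerivAt_prodMk_right q.1 q.2).comp q.2.1 (hasFDerivAt_prodMk_left q.2.1 q.2.2))
  exact h.hasDerivAt.deriv

end

section

variable {E : Type*} [NormedAddCommGroup E] [InnerProductSpace ℝ E] [CompleteSpace E]

theorem fderiv_uncurry_apply {H : E → E → ℝ} {x p : E}
    (hH : DifferentiableAt ℝ (fun z : E × E => H z.1 z.2) (x, p)) (a b : E) :
    fderiv ℝ (fun z : E × E => H z.1 z.2) (x, p) (a, b)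
      = ⟪gradient (fun y => H y p) x, a⟫ + ⟪gradient (fun y => H x y) p, b⟫ := by
  set DH := fderiv ℝ (fun z : E × E => H z.1 z.2) (x, p)
  have hx : HasFDerivAt (fun y => H y p) (DH.comp (inl ℝ E E)) x :=
    (hH.hasFDerivAt.comp x (hasFDerivAt_prodMk_left (𝕜 := ℝ) x p) :)
  have hp : HasFDerivAt (fun y => H x y) (DH.comp (inr ℝ E E)) p :=
    (hH.hasFDerivAt.comp p (hasFDerivAt_prodMk_right (𝕜 := ℝ) x p) :)
  rw [gradient, gradient, hx.fderiv, hp.fderiv, toDual_symm_apply, toDual_symm_apply]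
  exact (comp_inl_add_comp_inr _ (a, b)).symm

noncomputable def spatialGradient (u : ℝ × ℝ × E → ℝ) (q : ℝ × ℝ × E) : E :=
  gradient (fun y => u (q.1, q.2.1, y)) q.2.2

variable {u : ℝ × ℝ × E → ℝ} {q : ℝ × ℝ × E}

theorem spatialGradient_eq_toDual_symm (hu : DifferentiableAt ℝ u q) :
    spatialGradient u q
      = (toDual ℝ E).symm ((fderiv ℝ u q).comp ((inr ℝ ℝ (ℝ × E)).comp (inr ℝ ℝ E))) := by
  have h : HasFDerivAt (fun y => u (q.1, q.2.1, y))
      ((fderiv ℝ u q).comp ((inr ℝ ℝ (ℝ × E)).comp (inr ℝ ℝ E))) q.2.2 :=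
    hu.hasFDerivAt.comp q.2.2
      ((hasFDerivAt_prodMk_right q.1 q.2).comp q.2.2 (hasFDerivAt_prodMk_right q.2.1 q.2.2))
  rw [spatialGradient, gradient, h.fderiv]

theorem inner_spatialGradient (hu : DifferentiableAt ℝ u q) (ξ : E) :
    ⟪spatialGradient u q, ξ⟫ = fderiv ℝ u q (0, 0, ξ) := by
  rw [spatialGradient_eq_toDual_symm hu, toDual_symm_apply]
  rfl

theorem contDiff_spatialGradient {m : WithTop ℕ∞} (hu : ContDiff ℝ (m + 1) u) :
    ContDiff ℝ m (spatialGradient u) := by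
  have h : spatialGradient u = fun q =>
      (toDual ℝ E).symm ((fderiv ℝ u q).comp ((inr ℝ ℝ (ℝ × E)).comp (inr ℝ ℝ E))) :=
    funext fun q => spatialGradient_eq_toDual_symm (hu.differentiable (by simp) q)
  rw [h]
  exact (toDual ℝ E).symm.contDiff.comp ((hu.fderiv_right le_rfl).clm_comp contDiff_const)

theorem inner_fderiv_spatialGradient (hu : ContDiff ℝ 2 u) (v : ℝ × ℝ × E) (ξ : E) :
    ⟪fderiv ℝ (spatialGradient u) q v, ξ⟫ = fderiv ℝ (fderiv ℝ u) q v (0, 0, ξ) := by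
  have hw := ((contDiff_spatialGradient hu).differentiable one_ne_zero q).hasFDerivAt
  have hDu := ((hu.fderiv_right le_rfl).differentiable one_ne_zero q).hasFDerivAt
  have hL := (innerSLFlip ℝ ξ).hasFDerivAt.comp q hw
  have hR := (apply ℝ ℝ ((0, 0, ξ) : ℝ × ℝ × E)).hasFDerivAt.comp q hDu
  have hLR : innerSLFlip ℝ ξ ∘ spatialGradient u
      = apply ℝ ℝ ((0, 0, ξ) : ℝ × ℝ × E) ∘ fderiv ℝ u :=
    funext fun q' => inner_spatialGradient (hu.differentiable (by norm_num) q') ξ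
  rw [hLR] at hL
  have h := congrArg (· v) (hL.unique hR)
  simp only [coe_comp, Function.comp_apply, apply_apply] at h
  rwa [innerSLFlip_apply_apply] at h

theorem fderiv_fderiv_hamiltonJacobi_eq_zero {H : E → E → ℝ}
    (hu : ContDiff ℝ 2 u)
    (hH : DifferentiableAt ℝ (fun z : E × E => H z.1 z.2) (q.2.2, spatialGradient u q))
    (e : ℝ × ℝ × E)
    (hHJ : ∀ᶠ q' in 𝓝 q, fderiv ℝ u q' e + H q'.2.2 (spatialGradient u q') = 0)
    (v : ℝ × ℝ × E) :
    fderiv ℝ (fderiv ℝ u) q v e + ⟪gradient (fun y => H y (spatialGradient u q)) q.2.2, v.2.2⟫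
      + fderiv ℝ (fderiv ℝ u) q v (0, 0, gradient (fun p => H q.2.2 p) (spatialGradient u q))
      = 0 := by
  have hDu := ((hu.fderiv_right le_rfl).differentiable one_ne_zero q).hasFDerivAt
  have hw := ((contDiff_spatialGradient hu).differentiable one_ne_zero q).hasFDerivAt
  have hx : HasFDerivAt (fun q' : ℝ × ℝ × E => q'.2.2)
      ((snd ℝ ℝ E).comp (snd ℝ ℝ (ℝ × E))) q := ((snd ℝ ℝ E).comp (snd ℝ ℝ (ℝ × E))).hasFDerivAt
  have hF := ((apply ℝ ℝ e).hasFDerivAt.comp q hDu).add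
    (hH.hasFDerivAt.comp q (hx.prodMk hw))
  have h := congrArg (· v) (hF.unique ((hasFDerivAt_const (0 : ℝ) q).congr_of_eventuallyEq hHJ))
  simp only [add_apply, coe_comp, Function.comp_apply, apply_apply, prod_apply, coe_snd',
    zero_apply] at h
  rwa [fderiv_uncurry_apply hH, real_inner_comm (fderiv ℝ (spatialGradient u) q v),
    inner_fderiv_spatialGradient hu, ← add_assoc] at h

end

/-- If a `C²` function `u(t,s,x)` solves both `∂ₜu + H(x,Dₓu) = 0` and
`∂ₛu + G(x,Dₓu) = 0` on an open set, then `{H,G}(x, Dₓu) = 0` there. -/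
theorem stmt13
    (H G : EuclideanSpace ℝ (Fin n) → EuclideanSpace ℝ (Fin n) → ℝ)
    (hH : ContDiff ℝ 1 fun q : EuclideanSpace ℝ (Fin n) × EuclideanSpace ℝ (Fin n) => H q.1 q.2)
    (hG : ContDiff ℝ 1 fun q : EuclideanSpace ℝ (Fin n) × EuclideanSpace ℝ (Fin n) => G q.1 q.2)
    (u : ℝ × ℝ × EuclideanSpace ℝ (Fin n) → ℝ)
    (hu : ContDiff ℝ 2 u)
    (Ω : Set (ℝ × ℝ × EuclideanSpace ℝ (Fin n))) (hΩ : IsOpen Ω)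
    (heqH : ∀ q ∈ Ω, deriv (fun τ => u (τ, q.2.1, q.2.2)) q.1
        + H q.2.2 (gradient (fun y => u (q.1, q.2.1, y)) q.2.2) = 0)
    (heqG : ∀ q ∈ Ω, deriv (fun σ => u (q.1, σ, q.2.2)) q.2.1
        + G q.2.2 (gradient (fun y => u (q.1, q.2.1, y)) q.2.2) = 0) :
    ∀ q ∈ Ω, poissonBracket H G q.2.2 (gradient (fun y => u (q.1, q.2.1, y)) q.2.2) = 0 := by
  intro q hq
  have hud : Differentiable ℝ u := hu.differentiable (by norm_num)
  have hΩq : ∀ᶠ q' in 𝓝 q, q' ∈ Ω := hΩ.mem_nhds hq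
  have hDH := fderiv_fderiv_hamiltonJacobi_eq_zero hu (hH.differentiable one_ne_zero _) (1, 0, 0)
    (hΩq.mono fun q' hq' => deriv_slice_fst (hud q') ▸ heqH q' hq')
  have hDG := fderiv_fderiv_hamiltonJacobi_eq_zero hu (hG.differentiable one_ne_zero _) (0, 1, 0)
    (hΩq.mono fun q' hq' => deriv_slice_snd (hud q') ▸ heqG q' hq')
  have hsymm := hu.contDiffAt.isSymmSndFDerivAt (x := q) (by simp)
  change poissonBracket H G q.2.2 (spatialGradient u q) = 0
  unfold poissonBracket gradX gradP
  set ξH := gradient (fun p => H q.2.2 p) (spatialGradient u q)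
  set ξG := gradient (fun p => G q.2.2 p) (spatialGradient u q)
  have hDH_s := hDH (0, 1, 0)
  have hDG_t := hDG (1, 0, 0)
  have hDH_ξG := hDH (0, 0, ξG)
  have hDG_ξH := hDG (0, 0, ξH)
  simp only [inner_zero_right, add_zero] at hDH_s hDG_t hDH_ξG hDG_ξH
  rw [real_inner_comm _ ξH, real_inner_comm _ ξG]
  linarith [hsymm (0, 1, 0) (1, 0, 0), hsymm (1, 0, 0) (0, 0, ξG), hsymm (0, 1, 0) (0, 0, ξH),
    hsymm (0, 0, ξG) (0, 0, ξH)]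
end

section
/- Let f : ℝⁿ → ℝ. If f is both semiconcave with linear modulus (f − C|·|²/2 is concave for some C ≥ 0) and semiconvex with linear modulus (f + C|·|²/2 is convex for some C ≥ 0), then f is differentiable everywhere and its gradient is Lipschitz continuous (f is C^{1,1}). -/
/-!
The convex function `g = f + C'/2 ‖·‖²` has a subgradient at every point (separate `(x, g x)`
from the open strict epigraph of `g`), which gives a lower bound
`f (x + v) ≥ f x + a x v - C'/2 ‖v‖²`. Applied at `-v` and combined with the midpoint inequality
`f (x + v) + f (x - v) ≤ 2 f x + C ‖v‖²` of the semiconcave side, it also gives the matching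
upper bound, so `f (x + v) - f x - a x v = O(‖v‖²)` uniformly in `x`. Hence `a x` is the derivative
of `f` at `x`, and comparing these expansions along the three points `x`, `x + w`, `x + w + z`
with `‖z‖ ≤ ‖w‖` bounds `‖a x - a (x + w)‖` by a multiple of `‖w‖`.
-/

open Set Asymptotics

section NormedSpace

variable {E : Type*} [NormedAddCommGroup E] [NormedSpace ℝ E]

theorem ConvexOn.exists_subgradient {g : E → ℝ} (hg : ConvexOn ℝ univ g) (hcont : Continuous g)
    (x : E) : ∃ m : StrongDual ℝ E, ∀ y, g x + m (y - x) ≤ g y := by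
  obtain ⟨L, hL⟩ := geometric_hahn_banach_open_point (x := (x, g x))
    (by simpa using hg.convex_strict_epigraph)
    (isOpen_lt (hcont.comp continuous_fst) continuous_snd) (by simp)
  set c := L (0, 1)
  have hL_apply (y : E) (r : ℝ) : L (y, r) = L (y, 0) + r * c := by
    rw [← smul_eq_mul, ← map_smul, ← map_add, Prod.smul_mk, Prod.mk_add_mk]; simp
  have hc : 0 < -c := by
    have := hL (x, g x + 1) (by simp)
    rw [hL_apply x (g x + 1), hL_apply x (g x)] at this
    linarith
  refine ⟨(-c)⁻¹ • L.comp (ContinuousLinearMap.inl ℝ E ℝ),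
    fun y => le_of_forall_pos_lt_add fun ε hε => ?_⟩
  have hy := hL (y, g y + ε) (by simp [hε])
  rw [hL_apply y (g y + ε), hL_apply x (g x)] at hy
  have hsub : L (y - x, 0) = L (y, 0) - L (x, 0) := by
    rw [← map_sub, Prod.mk_sub_mk, sub_zero]
  have : (-c)⁻¹ * L (y - x, 0) < g y + ε - g x := by
    rw [inv_mul_lt_iff₀ hc, hsub]; linarith
  simp only [smul_apply, ContinuousLinearMap.comp_apply,
    ContinuousLinearMap.inl_apply, smul_eq_mul]
  linarith

theorem hasFDerivAt_of_abs_sub_le_mul_sq {f : E → ℝ} {m : StrongDual ℝ E} {x : E} {K : ℝ}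
    (h : ∀ v, |f (x + v) - f x - m v| ≤ K * ‖v‖ ^ 2) : HasFDerivAt f m x := by
  rw [hasFDerivAt_iff_isLittleO_nhds_zero]
  refine IsBigO.trans_isLittleO ?_ (isLittleO_norm_pow_id one_lt_two)
  exact .of_bound K (.of_forall fun v => by simpa using h v)

theorem apply_sub_apply_le_of_abs_sub_le_mul_sq {f : E → ℝ} {a : E → StrongDual ℝ E} {K : ℝ}
    (h : ∀ x v, |f (x + v) - f x - a x v| ≤ K * ‖v‖ ^ 2) (x w z : E) :
    a x z - a (x + w) z ≤ K * (‖w + z‖ ^ 2 + ‖z‖ ^ 2 + ‖w‖ ^ 2) := by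
  have h₁ := abs_le.1 (h x (w + z))
  have h₂ := abs_le.1 (h (x + w) z)
  have h₃ := abs_le.1 (h x w)
  rw [← add_assoc, map_add] at h₁
  linarith [h₁.1, h₂.2, h₃.2]

theorem norm_sub_le_of_abs_sub_le_mul_sq {f : E → ℝ} {a : E → StrongDual ℝ E} {K : ℝ}
    (h : ∀ x v, |f (x + v) - f x - a x v| ≤ K * ‖v‖ ^ 2) (x w : E) :
    ‖a x - a (x + w)‖ ≤ 6 * K * ‖w‖ := by
  rcases eq_or_ne w 0 with rfl | hw
  · simp
  have hr : 0 < ‖w‖ := norm_pos_iff.2 hw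
  have hK : 0 ≤ K := nonneg_of_mul_nonneg_left ((abs_nonneg _).trans (h x w)) (by positivity)
  have hbound : ∀ z ∈ Metric.closedBall (0 : E) ‖w‖, a x z - a (x + w) z ≤ 6 * K * ‖w‖ ^ 2 := by
    intro z hz
    rw [mem_closedBall_zero_iff] at hz
    have hwz : ‖w + z‖ ≤ 2 * ‖w‖ := by linarith [norm_add_le w z]
    calc a x z - a (x + w) z ≤ K * (‖w + z‖ ^ 2 + ‖z‖ ^ 2 + ‖w‖ ^ 2) :=
          apply_sub_apply_le_of_abs_sub_le_mul_sq h x w z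
      _ ≤ K * ((2 * ‖w‖) ^ 2 + ‖w‖ ^ 2 + ‖w‖ ^ 2) := by gcongr
      _ = 6 * K * ‖w‖ ^ 2 := by ring
  have := (a x - a (x + w)).opNorm_bound_of_ball_bound hr (6 * K * ‖w‖ ^ 2) fun z hz => by
    rw [Real.norm_eq_abs, abs_le]
    refine ⟨?_, hbound z hz⟩
    have := hbound (-z) (by simpa using hz)
    simp only [map_neg, sub_apply] at this ⊢
    linarith
  rwa [pow_two, ← mul_assoc, mul_div_cancel_right₀ _ hr.ne'] at this

theorem lipschitzWith_of_abs_sub_le_mul_sq {f : E → ℝ} {a : E → StrongDual ℝ E} {K : ℝ}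
    (h : ∀ x v, |f (x + v) - f x - a x v| ≤ K * ‖v‖ ^ 2) : LipschitzWith (6 * K).toNNReal a :=
  .of_dist_le' fun x y => by
    simpa [dist_eq_norm, norm_sub_rev y] using norm_sub_le_of_abs_sub_le_mul_sq h x (y - x)

end NormedSpace

section InnerProductSpace

variable {E : Type*} [NormedAddCommGroup E] [InnerProductSpace ℝ E] {f : E → ℝ} {C C' : ℝ}

theorem exists_lower_quadratic_bound_of_convexOn [FiniteDimensional ℝ E]
    (hf : ConvexOn ℝ univ fun x => f x + C / 2 * ‖x‖ ^ 2) (x : E) :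
    ∃ m : StrongDual ℝ E, ∀ v, f x + m v - C / 2 * ‖v‖ ^ 2 ≤ f (x + v) := by
  obtain ⟨m, hm⟩ := hf.exists_subgradient hf.locallyLipschitz.continuous x
  refine ⟨m - C • innerSL ℝ x, fun v => ?_⟩
  have := hm (x + v)
  rw [add_sub_cancel_left, norm_add_sq_real] at this
  simp only [sub_apply, smul_apply, innerSL_apply_apply, smul_eq_mul]
  linarith

theorem add_add_sub_le_of_concaveOn (hf : ConcaveOn ℝ univ fun x => f x - C / 2 * ‖x‖ ^ 2)
    (x v : E) : f (x + v) + f (x - v) ≤ 2 * f x + C * ‖v‖ ^ 2 := by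
  have := hf.2 (mem_univ (x + v)) (mem_univ (x - v)) (by norm_num : (0 : ℝ) ≤ 1 / 2)
    (by norm_num : (0 : ℝ) ≤ 1 / 2) (by norm_num)
  have hmid : (1 / 2 : ℝ) • (x + v) + (1 / 2 : ℝ) • (x - v) = x := by module
  simp only [hmid, smul_eq_mul] at this
  linear_combination 2 * this + C / 2 * parallelogram_law_with_norm ℝ x v

theorem exists_abs_sub_le_mul_sq_of_concaveOn_of_convexOn [FiniteDimensional ℝ E] (hC : 0 ≤ C)
    (hconc : ConcaveOn ℝ univ fun x => f x - C / 2 * ‖x‖ ^ 2)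
    (hconv : ConvexOn ℝ univ fun x => f x + C' / 2 * ‖x‖ ^ 2) :
    ∃ a : E → StrongDual ℝ E, ∀ x v, |f (x + v) - f x - a x v| ≤ (C + C' / 2) * ‖v‖ ^ 2 := by
  choose a ha using exists_lower_quadratic_bound_of_convexOn hconv
  refine ⟨a, fun x v => abs_le.2 ⟨?_, ?_⟩⟩
  · linarith [ha x v, mul_nonneg hC (sq_nonneg ‖v‖)]
  · have := ha x (-v)
    rw [map_neg, norm_neg, ← sub_eq_add_neg x v] at this
    linarith [add_add_sub_le_of_concaveOn hconc x v]

end InnerProductSpace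

theorem stmt16_general {n : ℕ} (f : EuclideanSpace ℝ (Fin n) → ℝ)
    (C C' : ℝ) (hC : 0 ≤ C)
    (hconc : ConcaveOn ℝ Set.univ (fun x => f x - C / 2 * ‖x‖ ^ 2))
    (hconv : ConvexOn ℝ Set.univ (fun x => f x + C' / 2 * ‖x‖ ^ 2)) :
    Differentiable ℝ f ∧ ∃ K : NNReal, LipschitzWith K (fun x => gradient f x) := by
  obtain ⟨a, ha⟩ := exists_abs_sub_le_mul_sq_of_concaveOn_of_convexOn hC hconc hconv
  have hderiv (x) : HasFDerivAt f (a x) x := hasFDerivAt_of_abs_sub_le_mul_sq (ha x)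
  have hgrad : (fun x => gradient f x) = (InnerProductSpace.toDual ℝ _).symm ∘ a := by
    rw [← funext fun x => (hderiv x).fderiv]; rfl
  refine ⟨fun x => (hderiv x).differentiableAt, ?_⟩
  rw [hgrad]
  exact ⟨_, (InnerProductSpace.toDual ℝ _).symm.lipschitz.comp
    (lipschitzWith_of_abs_sub_le_mul_sq ha)⟩

/-- A function on `ℝⁿ` that is both semiconcave and semiconvex with linear modulus is
`C^{1,1}`: differentiable everywhere with Lipschitz gradient. -/
theorem stmt16 {n : ℕ} (f : EuclideanSpace ℝ (Fin n) → ℝ)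
    (C C' : ℝ) (hC : 0 ≤ C) (hC' : 0 ≤ C')
    (hconc : ConcaveOn ℝ Set.univ (fun x => f x - C / 2 * ‖x‖ ^ 2))
    (hconv : ConvexOn ℝ Set.univ (fun x => f x + C' / 2 * ‖x‖ ^ 2)) :
    Differentiable ℝ f ∧ ∃ K : NNReal, LipschitzWith K (fun x => gradient f x) :=
  stmt16_general f C C' hC hconc hconv
end

section
/- Let F : ℝⁿ×ℝⁿ → ℝ be continuous and coercive in p uniformly in x (inf_x F(x,p) → +∞ as |p| → ∞). If u is a continuous viscosity subsolution of F(x, D u) ≤ M on ℝⁿ for some constant M (i.e., F(x, Dφ(x)) ≤ M whenever φ is C¹ and u−φ has a local max at x), then u is Lipschitz continuous with a Lipschitz constant depending only on M and F. -/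
/-!
Coercivity bounds every `p` with `F x p ≤ M` by some `K`, so every supergradient of `u` has
norm at most `K`, and it remains to see that a continuous function with supergradients bounded
by `K` is `K`-Lipschitz. For `L > K` and points `x`, `y`, compare `u` on a ball `B(x, r)`
containing `y` with `ψ w = L √(‖w - x‖² + d²) + A (‖w - x‖ / r)^(2k)`, a smoothed cone plus a
penalty that vanishes at `x`, equals `A` on the sphere and is small at `y` for large `k`.
With `A` larger than the oscillation of `u` on the ball, `u - ψ` attains its maximum over the
ball at an interior point `z`; there the gradient of `ψ` points along `z - x` with length at
least `L ‖z - x‖ / √(‖z - x‖² + d²)`, and the bound `K < L` forces `‖z - x‖ = O(d)`. Comparing the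
values at `y` and `z` and letting `d → 0`, `k → ∞` gives `u y ≤ u x + L ‖y - x‖`.
-/

open Real Metric Filter Topology NNReal

section ConeBarrier
variable {E : Type*} [SeminormedAddCommGroup E]

noncomputable def coneBarrier (x : E) (L d A r : ℝ) (k : ℕ) (w : E) : ℝ :=
  L * √(‖w - x‖ ^ 2 + d ^ 2) + A * (‖w - x‖ ^ 2 / r ^ 2) ^ k

variable {x : E} {L d A r : ℝ} {k : ℕ}

theorem coneBarrier_nonneg (hL : 0 ≤ L) (hA : 0 ≤ A) (w : E) : 0 ≤ coneBarrier x L d A r k w := by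
  unfold coneBarrier; positivity

theorem coneBarrier_self (hd : 0 ≤ d) (hk : k ≠ 0) : coneBarrier x L d A r k x = L * d := by
  simp [coneBarrier, hk, sqrt_sq hd]

theorem coneBarrier_of_norm_sub_eq {w : E} (hr : r ≠ 0) (hw : ‖w - x‖ = r) :
    coneBarrier x L d A r k w = L * √(r ^ 2 + d ^ 2) + A := by
  simp [coneBarrier, hw, hr]

theorem coneBarrier_le (hL : 0 ≤ L) (hd : 0 ≤ d) (w : E) :
    coneBarrier x L d A r k w ≤ L * ‖w - x‖ + L * d + A * (‖w - x‖ ^ 2 / r ^ 2) ^ k := by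
  have : √(‖w - x‖ ^ 2 + d ^ 2) ≤ ‖w - x‖ + d :=
    sqrt_le_iff.2 ⟨by positivity, by nlinarith [norm_nonneg (w - x)]⟩
  unfold coneBarrier; nlinarith

end ConeBarrier

theorem Metric.exists_isLocalMax_isMaxOn_closedBall {X : Type*} [PseudoMetricSpace X] [ProperSpace X]
    {f : X → ℝ} (hf : Continuous f) {x : X} {r : ℝ} (hr : 0 ≤ r)
    (hsphere : ∀ w ∈ sphere x r, f w < f x) :
    ∃ z ∈ ball x r, IsLocalMax f z ∧ IsMaxOn f (closedBall x r) z := by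
  obtain ⟨z, hz, hmax⟩ := (isCompact_closedBall x r).exists_isMaxOn
    ⟨x, mem_closedBall_self hr⟩ hf.continuousOn
  have hz' : z ∈ ball x r := by
    refine lt_of_le_of_ne (mem_closedBall.1 hz) fun h => ?_
    exact (hsphere z h).not_ge (hmax (mem_closedBall_self hr))
  exact ⟨z, hz', hmax.isLocalMax (closedBall_mem_nhds_of_mem hz'), hmax⟩

section InnerProductSpace
variable {E : Type*} [NormedAddCommGroup E] [InnerProductSpace ℝ E]

theorem HasDerivAt.hasGradientAt_comp_norm_sub_sq [CompleteSpace E] {g : ℝ → ℝ} {g' : ℝ}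
    {x z : E} (hg : HasDerivAt g g' (‖z - x‖ ^ 2)) :
    HasGradientAt (fun w => g (‖w - x‖ ^ 2)) ((2 * g') • (z - x)) z := by
  rw [hasGradientAt_iff_hasFDerivAt]
  refine (hg.comp_hasFDerivAt z ((hasFDerivAt_id z).sub_const x).norm_sq).congr_fderiv ?_
  ext w
  simp [InnerProductSpace.toDual_apply_apply]
  ring

variable {x : E} {L d A r : ℝ} {k : ℕ}

theorem contDiff_coneBarrier (hd : d ≠ 0) : ContDiff ℝ 1 (coneBarrier x L d A r k) := by
  have hsq : ContDiff ℝ 1 fun w : E => ‖w - x‖ ^ 2 :=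
    (contDiff_norm_sq ℝ).comp (contDiff_id.sub contDiff_const)
  exact (contDiff_const.mul ((hsq.add contDiff_const).sqrt fun w => by positivity)).add
    (contDiff_const.mul ((hsq.div_const _).pow k))

theorem sq_norm_sub_mul_le_of_norm_gradient_coneBarrier_le [CompleteSpace E] {z : E} {K : ℝ}
    (hL : 0 ≤ L) (hd : d ≠ 0) (hA : 0 ≤ A) (hK : ‖gradient (coneBarrier x L d A r k) z‖ ≤ K) :
    ‖z - x‖ ^ 2 * (L ^ 2 - K ^ 2) ≤ K ^ 2 * d ^ 2 := by
  set s := ‖z - x‖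
  set σ := √(s ^ 2 + d ^ 2)
  have hσ : 0 < σ := sqrt_pos.2 (by positivity)
  set c := A * (k * (s ^ 2 / r ^ 2) ^ (k - 1) * (1 / r ^ 2))
  have hc : 0 ≤ c := by positivity
  have hgrad : HasGradientAt (coneBarrier x L d A r k)
      ((2 * (L * (1 / (2 * σ)) + c)) • (z - x)) z := by
    have hsqrt : HasDerivAt (fun t => √(t + d ^ 2)) (1 / (2 * σ)) (s ^ 2) :=
      ((hasDerivAt_id _).add_const _).sqrt (by positivity) |>.congr_deriv (by simp [σ])
    exact ((hsqrt.const_mul L).add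
      ((((hasDerivAt_id _).div_const _).pow k).const_mul A)).hasGradientAt_comp_norm_sub_sq
  rw [hgrad.gradient, norm_smul, Real.norm_of_nonneg (by positivity)] at hK
  have hLs : L * s ≤ K * σ :=
    calc L * s ≤ 2 * (L * (1 / (2 * σ)) + c) * s * σ := by
          field_simp; nlinarith [mul_nonneg (mul_nonneg (norm_nonneg (z - x)) hσ.le) hc]
      _ ≤ K * σ := mul_le_mul_of_nonneg_right hK hσ.le
  have hσsq : σ ^ 2 = s ^ 2 + d ^ 2 := sq_sqrt (by positivity)
  nlinarith [pow_le_pow_left₀ (by positivity) hLs 2]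

variable [ProperSpace E] {u : E → ℝ} {K : ℝ≥0}

theorem exists_isMaxOn_sub_coneBarrier (hu : Continuous u)
    (hgrad : ∀ φ : E → ℝ, ContDiff ℝ 1 φ → ∀ z, IsLocalMax (fun w => u w - φ w) z →
      ‖gradient φ z‖ ≤ K) (hL : 0 ≤ L) (hd : 0 < d) (hr : 0 < r) (hk : k ≠ 0)
    (hA : ∀ w ∈ closedBall x r, u w < u x + A) :
    ∃ z, ‖z - x‖ ^ 2 * (L ^ 2 - K ^ 2) ≤ K ^ 2 * d ^ 2 ∧
      IsMaxOn (fun w => u w - coneBarrier x L d A r k w) (closedBall x r) z := by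
  set ψ := coneBarrier x L d A r k
  have hψ : ContDiff ℝ 1 ψ := contDiff_coneBarrier hd.ne'
  have hA0 : 0 ≤ A := by linarith [hA x (mem_closedBall_self hr.le)]
  obtain ⟨z, -, hzloc, hzmax⟩ :=
    exists_isLocalMax_isMaxOn_closedBall (hu.sub hψ.continuous) hr.le fun w hw => by
      have hw' : ‖w - x‖ = r := by rwa [← dist_eq_norm]
      have hψw : ψ w = L * √(r ^ 2 + d ^ 2) + A := coneBarrier_of_norm_sub_eq hr.ne' hw'
      have hψx : ψ x = L * d := coneBarrier_self hd.le hk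
      have : L * d ≤ L * √(r ^ 2 + d ^ 2) :=
        mul_le_mul_of_nonneg_left (le_sqrt_of_sq_le (by nlinarith)) hL
      show u w - ψ w < u x - ψ x
      linarith [hA w (sphere_subset_closedBall hw)]
  exact ⟨z, sq_norm_sub_mul_le_of_norm_gradient_coneBarrier_le hL hd.ne' hA0
    (hgrad ψ hψ z hzloc), hzmax⟩

theorem le_add_mul_norm_sub_of_norm_gradient_le (hu : Continuous u)
    (hgrad : ∀ φ : E → ℝ, ContDiff ℝ 1 φ → ∀ z, IsLocalMax (fun w => u w - φ w) z →
      ‖gradient φ z‖ ≤ K) {L : ℝ} (hKL : K < L) (x y : E) :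
    u y ≤ u x + L * ‖y - x‖ := by
  have hL : 0 ≤ L := K.2.trans hKL.le
  suffices h : ∀ ε > 0, u y ≤ u x + L * ‖y - x‖ + 3 * ε from
    le_of_forall_pos_le_add fun ε hε => by linarith [h (ε / 3) (by positivity)]
  intro ε hε
  set r := ‖y - x‖ + 1
  have hr : 0 < r := by positivity
  obtain ⟨S, hS⟩ := (isCompact_closedBall x r).bddAbove_image hu.continuousOn
  set A := S - u x + 1
  have hA : ∀ w ∈ closedBall x r, u w < u x + A := fun w hw => by linarith [hS ⟨w, hw, rfl⟩]
  obtain ⟨η, hη, hηu⟩ := Metric.continuousAt_iff.1 (hu.continuousAt (x := x)) ε hε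
  have hKL2 : (0 : ℝ) < L ^ 2 - K ^ 2 := by nlinarith [K.2]
  obtain ⟨d, hd, hLd, hKd⟩ :
      ∃ d > 0, L * d < ε ∧ (K : ℝ) ^ 2 * d ^ 2 < (L ^ 2 - K ^ 2) * η ^ 2 := by
    have h0 : ∀ᶠ d in 𝓝 (0 : ℝ), L * d < ε ∧ (K : ℝ) ^ 2 * d ^ 2 < (L ^ 2 - K ^ 2) * η ^ 2 :=
      (ContinuousAt.eventually_lt (by fun_prop) continuousAt_const (by simpa using hε)).and
        (ContinuousAt.eventually_lt (by fun_prop) continuousAt_const (by simp; positivity))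
    obtain ⟨d, hd, hd0⟩ :=
      ((h0.filter_mono nhdsWithin_le_nhds).and (self_mem_nhdsWithin (s := Set.Ioi 0))).exists
    exact ⟨d, hd0, hd⟩
  obtain ⟨k, hk, hk0⟩ : ∃ k : ℕ, A * (‖y - x‖ ^ 2 / r ^ 2) ^ k < ε ∧ k ≠ 0 := by
    have hq : ‖y - x‖ ^ 2 / r ^ 2 < 1 := by
      rw [div_lt_one (by positivity)]; nlinarith [norm_nonneg (y - x)]
    have := (tendsto_pow_atTop_nhds_zero_of_lt_one (by positivity) hq).const_mul A
    exact ((this.eventually_lt_const (by simpa using hε)).and (eventually_ne_atTop 0)).exists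
  obtain ⟨z, hzd, hzmax⟩ := exists_isMaxOn_sub_coneBarrier hu hgrad hL hd hr hk0 hA
  have huz : u z < u x + ε := by
    have hzη : ‖z - x‖ < η :=
      (pow_lt_pow_iff_left₀ (norm_nonneg _) hη.le two_ne_zero).1 (by nlinarith)
    have := hηu (by rwa [dist_eq_norm]); rw [Real.dist_eq] at this; linarith [abs_lt.1 this]
  have hy : u y - coneBarrier x L d A r k y ≤ u z - coneBarrier x L d A r k z :=
    hzmax (mem_closedBall.2 (by rw [dist_eq_norm]; linarith))
  have hψy : coneBarrier x L d A r k y ≤ L * ‖y - x‖ + L * d + A * (‖y - x‖ ^ 2 / r ^ 2) ^ k :=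
    coneBarrier_le hL hd.le y
  have hψz : 0 ≤ coneBarrier x L d A r k z :=
    coneBarrier_nonneg hL (by linarith [hA x (mem_closedBall_self hr.le)]) z
  linarith

theorem lipschitzWith_of_norm_gradient_le (hu : Continuous u)
    (hgrad : ∀ φ : E → ℝ, ContDiff ℝ 1 φ → ∀ z, IsLocalMax (fun w => u w - φ w) z →
      ‖gradient φ z‖ ≤ K) :
    LipschitzWith K u := by
  refine LipschitzWith.of_le_add_mul K fun y x => ?_
  rw [dist_eq_norm]
  have hlim : Tendsto (fun L : ℝ => u x + L * ‖y - x‖) (𝓝[>] (K : ℝ)) (𝓝 (u x + K * ‖y - x‖)) :=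
    (Continuous.tendsto (by fun_prop) _).mono_left nhdsWithin_le_nhds
  exact ge_of_tendsto hlim (eventually_nhdsWithin_of_forall fun L hL =>
    le_add_mul_norm_sub_of_norm_gradient_le hu hgrad hL x y)

end InnerProductSpace

theorem stmt17_general {n : ℕ}
    (F : EuclideanSpace ℝ (Fin n) → EuclideanSpace ℝ (Fin n) → ℝ) (M : ℝ)
    (hcoerc : ∀ R : ℝ, ∃ ρ : ℝ, ∀ x p : EuclideanSpace ℝ (Fin n), ρ ≤ ‖p‖ → R ≤ F x p)
    (u : EuclideanSpace ℝ (Fin n) → ℝ) (hu : Continuous u)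
    (hsub : ∀ φ : EuclideanSpace ℝ (Fin n) → ℝ, ContDiff ℝ 1 φ →
      ∀ x, IsLocalMax (fun y => u y - φ y) x → F x (gradient φ x) ≤ M) :
    ∃ K : NNReal, (∀ x p : EuclideanSpace ℝ (Fin n), F x p ≤ M → ‖p‖ ≤ K) ∧
      LipschitzWith K u := by
  obtain ⟨ρ, hρ⟩ := hcoerc (M + 1)
  have hbound : ∀ x p, F x p ≤ M → ‖p‖ ≤ ρ.toNNReal := fun x p hp =>
    (le_of_not_ge fun h => by linarith [hρ x p h]).trans (le_coe_toNNReal ρ)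
  exact ⟨ρ.toNNReal, hbound,
    lipschitzWith_of_norm_gradient_le hu fun φ hφ z hz => hbound z _ (hsub φ hφ z hz)⟩

/-- A continuous viscosity subsolution of `F(x, Du) ≤ M` on `ℝⁿ`, with `F` continuous and
coercive in `p` uniformly in `x`, is Lipschitz with constant depending only on `M` and `F`
(namely any bound on the norms of momenta `p` with `F(x,p) ≤ M`). -/
theorem stmt17 {n : ℕ}
    (F : EuclideanSpace ℝ (Fin n) → EuclideanSpace ℝ (Fin n) → ℝ) (M : ℝ)
    (hF : Continuous fun q : EuclideanSpace ℝ (Fin n) × EuclideanSpace ℝ (Fin n) => F q.1 q.2)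
    (hcoerc : ∀ R : ℝ, ∃ ρ : ℝ, ∀ x p : EuclideanSpace ℝ (Fin n), ρ ≤ ‖p‖ → R ≤ F x p)
    (u : EuclideanSpace ℝ (Fin n) → ℝ) (hu : Continuous u)
    (hsub : ∀ φ : EuclideanSpace ℝ (Fin n) → ℝ, ContDiff ℝ 1 φ →
      ∀ x, IsLocalMax (fun y => u y - φ y) x → F x (gradient φ x) ≤ M) :
    ∃ K : NNReal, (∀ x p : EuclideanSpace ℝ (Fin n), F x p ≤ M → ‖p‖ ≤ K) ∧
      LipschitzWith K u :=
  stmt17_general F M hcoerc u hu hsub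
end
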